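/- Let U be a metric space admitting a Lipschitz strong deformation retraction to a point p ∈ U, and fix L > 6. Then the cone K(U) admits a Lipschitz strong deformation retraction onto its base U × {0} = {[x,0] : x ∈ U}. -/

import Mathlib

open Metric Set

/-- The cone distance on `M × [0,L]` (representatives of the cone
`K(M) = M × [0,L] / (M × {L})`). Two representatives are identified in the cone iff their
cone distance is `0`. -/
noncomputable def coneDist {M : Type*} [PseudoMetricSpace M] (L : ℝ) (c c' : M × ℝ) : ℝ :=
  Real.sqrt ((L - c.2) ^ 2 + (L - c'.2) ^ 2 -
    2 * (L - c.2) * (L - c'.2) * Real.cos (min Real.pi (dist c.1 c'.1)))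

/-- A metric space `X` admits a *Lipschitz strong deformation retraction to a point*
`p ∈ X`. -/
def SpaceLipSDRToPoint (X : Type*) [MetricSpace X] (p : X) : Prop :=
  ∃ (F : X × unitInterval → X) (K : NNReal), LipschitzWith K F ∧
    (∀ x, F (x, 0) = x) ∧ (∀ x, F (x, 1) = p) ∧ (∀ t, F (p, t) = p)

/-!
The cone distance between `[x, a]` and `[x', a']` is comparable to
`|a - a'| + min (L - a) (L - a') * min π (d x x')`, and this quantity satisfies a triangle
inequality up to the factor `1 + π`; so it suffices to estimate it separately in time and in space.
The retraction runs in two halves. On `[0, 1/2]` the given deformation contracts the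
`U`-coordinate of every point at height `≥ L - 2` towards `p`, completely from height `L - 1` on;
on `[1/2, 1]` all heights are scaled down linearly to `0`. Lowering the heights enlarges the
angular weight `L - a`, but only near the apex, and there two points either have both been
collapsed to `p` or differ in height by at least `1/2`.
-/

open Real

lemma sqrt_law_cos_le {r r' θ : ℝ} (hr : 0 ≤ r) (hr' : 0 ≤ r') (hθ : 0 ≤ θ) :
    √(r ^ 2 + r' ^ 2 - 2 * r * r' * cos θ) ≤ (1 + θ) * |r - r'| + min r r' * θ := by
  have hcos : 1 - θ ^ 2 / 2 ≤ cos θ := one_sub_sq_div_two_le_cos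
  have hprod : r * r' ≤ (min r r' + |r - r'|) ^ 2 := by
    rcases le_total r r' with h | h
    · rw [min_eq_left h, abs_of_nonpos (by linarith)]; nlinarith
    · rw [min_eq_right h, abs_of_nonneg (by linarith)]; nlinarith
  have hm : 0 ≤ min r r' := le_min hr hr'
  rw [sqrt_le_iff]
  refine ⟨by positivity, ?_⟩
  nlinarith [mul_le_mul_of_nonneg_left hcos (mul_nonneg hr hr'), sq_abs (r - r'),
    mul_le_mul_of_nonneg_right hprod (sq_nonneg θ),
    mul_nonneg (mul_nonneg (abs_nonneg (r - r')) (add_nonneg hm (abs_nonneg (r - r')))) hθ]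

lemma abs_sub_le_sqrt_law_cos {r r' : ℝ} (θ : ℝ) (hr : 0 ≤ r) (hr' : 0 ≤ r') :
    |r - r'| ≤ √(r ^ 2 + r' ^ 2 - 2 * r * r' * cos θ) :=
  abs_le_sqrt (by nlinarith [mul_nonneg hr hr', cos_le_one θ])

lemma two_mul_min_mul_le_pi_mul_sqrt_law_cos {r r' θ : ℝ} (hr : 0 ≤ r) (hr' : 0 ≤ r')
    (hθ₀ : 0 ≤ θ) (hθπ : θ ≤ π) :
    2 * min r r' * θ ≤ π * √(r ^ 2 + r' ^ 2 - 2 * r * r' * cos θ) := by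
  have hcos : cos θ ≤ 1 - 2 / π ^ 2 * θ ^ 2 :=
    cos_le_one_sub_mul_cos_sq (by rwa [abs_of_nonneg hθ₀])
  have hmin : min r r' * min r r' ≤ r * r' := mul_le_mul (min_le_left _ _) (min_le_right _ _)
    (le_min hr hr') hr
  have hpos : 0 ≤ r ^ 2 + r' ^ 2 - 2 * r * r' * cos θ := by
    nlinarith [mul_nonneg hr hr', cos_le_one θ, sq_nonneg (r - r')]
  rw [← div_le_iff₀' pi_pos, le_sqrt (by positivity) hpos, div_pow,
    div_le_iff₀ (by positivity)]
  have hcos' : 2 * θ ^ 2 ≤ π ^ 2 * (1 - cos θ) := by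
    have hπ : π ^ 2 * (2 / π ^ 2 * θ ^ 2) = 2 * θ ^ 2 := by field_simp
    nlinarith [mul_le_mul_of_nonneg_left hcos (sq_nonneg π)]
  nlinarith [mul_le_mul_of_nonneg_left hcos' (mul_nonneg hr hr'), sq_nonneg (r - r'),
    mul_le_mul_of_nonneg_right hmin (sq_nonneg θ)]

lemma min_pi_le_add {u v w : ℝ} (hv : 0 ≤ v) (hw : 0 ≤ w) (h : u ≤ v + w) :
    min π u ≤ min π v + min π w := by
  rcases le_total π v with hπv | hvπ
  · rw [min_eq_left hπv]; linarith [min_le_left π u, le_min pi_nonneg hw]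
  rcases le_total π w with hπw | hwπ
  · rw [min_eq_left hπw]; linarith [min_le_left π u, le_min pi_nonneg hv]
  rw [min_eq_right hvπ, min_eq_right hwπ]
  exact (min_le_right _ _).trans h

lemma min_pi_le_of_le_mul_max {u d e K : ℝ} (hK : 0 ≤ K) (hd : 0 ≤ d) (he : 0 ≤ e)
    (h : u ≤ K * max d e) : min π u ≤ (K + 1) * (min π d + e) := by
  rcases le_total d π with hdπ | hπd
  · rw [min_eq_right hdπ]
    calc min π u ≤ K * max d e := (min_le_right _ _).trans h
      _ ≤ K * (d + e) := by gcongr; exact max_le (by linarith) (by linarith)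
      _ ≤ (K + 1) * (d + e) := by nlinarith
  · rw [min_eq_left hπd]
    nlinarith [min_le_left π u, pi_pos]

lemma min_le_min_add_abs (a b c : ℝ) : min a b ≤ min a c + |b - c| := by
  have := abs_min_sub_min_le_max a b a c
  rw [sub_self, abs_zero, max_eq_right (abs_nonneg _)] at this
  linarith [le_abs_self (min a b - min a c)]

section ConeQuasiDist

variable {M : Type*} [PseudoMetricSpace M] {L : ℝ}

/-- Comparable to `coneDist` up to the factors `5` and `π`, but, unlike it, directly estimable
term by term. -/
noncomputable def coneQuasiDist (L : ℝ) (c c' : M × ℝ) : ℝ :=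
  |c.2 - c'.2| + min (L - c.2) (L - c'.2) * min π (dist c.1 c'.1)

lemma coneDist_self (c : M × ℝ) : coneDist L c c = 0 := by
  rw [coneDist, dist_self, min_eq_right pi_nonneg, cos_zero]
  ring_nf
  exact sqrt_zero

lemma coneDist_le_five_mul_coneQuasiDist {c c' : M × ℝ} (hc : c.2 ≤ L) (hc' : c'.2 ≤ L) :
    coneDist L c c' ≤ 5 * coneQuasiDist L c c' := by
  have hθ₀ : 0 ≤ min π (dist c.1 c'.1) := le_min pi_nonneg dist_nonneg
  have hθ₄ : min π (dist c.1 c'.1) ≤ 4 := (min_le_left _ _).trans pi_le_four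
  have h := sqrt_law_cos_le (sub_nonneg.2 hc) (sub_nonneg.2 hc') hθ₀
  rw [sub_sub_sub_cancel_left, abs_sub_comm] at h
  have hm : 0 ≤ min (L - c.2) (L - c'.2) * min π (dist c.1 c'.1) :=
    mul_nonneg (le_min (sub_nonneg.2 hc) (sub_nonneg.2 hc')) hθ₀
  rw [coneDist, coneQuasiDist]
  nlinarith [abs_nonneg (c.2 - c'.2)]

lemma coneQuasiDist_le_pi_mul_coneDist {c c' : M × ℝ} (hc : c.2 ≤ L) (hc' : c'.2 ≤ L) :
    coneQuasiDist L c c' ≤ π * coneDist L c c' := by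
  have h₁ := abs_sub_le_sqrt_law_cos (min π (dist c.1 c'.1)) (sub_nonneg.2 hc) (sub_nonneg.2 hc')
  have h₂ := two_mul_min_mul_le_pi_mul_sqrt_law_cos (sub_nonneg.2 hc) (sub_nonneg.2 hc')
    (le_min pi_nonneg (dist_nonneg (x := c.1) (y := c'.1))) (min_le_left _ _)
  rw [sub_sub_sub_cancel_left, abs_sub_comm] at h₁
  rw [coneDist, coneQuasiDist]
  nlinarith [pi_gt_three, sqrt_nonneg ((L - c.2) ^ 2 + (L - c'.2) ^ 2 -
    2 * (L - c.2) * (L - c'.2) * cos (min π (dist c.1 c'.1)))]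

lemma abs_sub_le_coneQuasiDist {c c' : M × ℝ} (hc : c.2 ≤ L) (hc' : c'.2 ≤ L) :
    |c.2 - c'.2| ≤ coneQuasiDist L c c' :=
  le_add_of_nonneg_right <|
    mul_nonneg (le_min (sub_nonneg.2 hc) (sub_nonneg.2 hc')) (le_min pi_nonneg dist_nonneg)

lemma coneQuasiDist_triangle {c c' c'' : M × ℝ} (hc : c.2 ≤ L) (hc' : c'.2 ≤ L)
    (hc'' : c''.2 ≤ L) :
    coneQuasiDist L c c'' ≤ (1 + π) * (coneQuasiDist L c c' + coneQuasiDist L c' c'') := by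
  set θ₁ := min π (dist c.1 c'.1)
  set θ₂ := min π (dist c'.1 c''.1)
  have hθ₁ : 0 ≤ θ₁ := le_min pi_nonneg dist_nonneg
  have hθ₂ : 0 ≤ θ₂ := le_min pi_nonneg dist_nonneg
  have hθ : min π (dist c.1 c''.1) ≤ θ₁ + θ₂ :=
    min_pi_le_add dist_nonneg dist_nonneg (dist_triangle _ _ _)
  have hm₁ : min (L - c.2) (L - c''.2) ≤ min (L - c.2) (L - c'.2) + |c'.2 - c''.2| := by
    simpa only [sub_sub_sub_cancel_left] using min_le_min_add_abs (L - c.2) (L - c''.2) (L - c'.2)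
  have hm₂ : min (L - c.2) (L - c''.2) ≤ min (L - c'.2) (L - c''.2) + |c.2 - c'.2| := by
    simpa only [min_comm _ (L - c''.2), sub_sub_sub_cancel_left, abs_sub_comm c'.2]
      using min_le_min_add_abs (L - c''.2) (L - c.2) (L - c'.2)
  have hm : 0 ≤ min (L - c.2) (L - c''.2) := le_min (sub_nonneg.2 hc) (sub_nonneg.2 hc'')
  have hm' : 0 ≤ min (L - c.2) (L - c'.2) * θ₁ :=
    mul_nonneg (le_min (sub_nonneg.2 hc) (sub_nonneg.2 hc')) hθ₁
  have hm'' : 0 ≤ min (L - c'.2) (L - c''.2) * θ₂ :=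
    mul_nonneg (le_min (sub_nonneg.2 hc') (sub_nonneg.2 hc'')) hθ₂
  unfold coneQuasiDist
  nlinarith [abs_sub_le c.2 c'.2 c''.2, mul_le_mul_of_nonneg_left hθ hm,
    mul_le_mul_of_nonneg_right hm₁ hθ₁, mul_le_mul_of_nonneg_right hm₂ hθ₂,
    min_le_left π (dist c.1 c'.1), min_le_left π (dist c'.1 c''.1),
    abs_nonneg (c.2 - c'.2), abs_nonneg (c'.2 - c''.2), pi_pos]

end ConeQuasiDist

lemma unitInterval.dist_mul_left_le (w u v : unitInterval) : dist (w * u) (w * v) ≤ dist u v := by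
  rw [Subtype.dist_eq, Subtype.dist_eq, Icc.coe_mul, Icc.coe_mul, Real.dist_eq, Real.dist_eq,
    ← mul_sub, abs_mul, abs_of_nonneg w.2.1]
  exact mul_le_of_le_one_left (abs_nonneg _) w.2.2

lemma unitInterval.dist_mul_right_le (u v w : unitInterval) :
    dist (u * w) (v * w) ≤ dist u v := by
  simpa only [mul_comm _ w] using unitInterval.dist_mul_left_le w u v

section Retraction

open unitInterval

noncomputable def unitClamp (v : ℝ) : I := projIcc 0 1 zero_le_one v

lemma dist_unitClamp_le (v w : ℝ) : dist (unitClamp v) (unitClamp w) ≤ |v - w| := by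
  rw [Subtype.dist_eq, Real.dist_eq]
  exact abs_projIcc_sub_projIcc zero_le_one

lemma unitClamp_of_nonpos {v : ℝ} (hv : v ≤ 0) : unitClamp v = 0 := projIcc_of_le_left _ hv

lemma unitClamp_of_one_le {v : ℝ} (hv : 1 ≤ v) : unitClamp v = 1 := projIcc_of_right_le _ hv

variable {U : Type*} {f : U × I → U} {L : ℝ}

variable (f L) in
noncomputable def coneRetraction (q : (U × ℝ) × I) : U × ℝ :=
  (f (q.1.1, unitClamp (2 * q.2) * unitClamp (q.1.2 - L + 2)), unitClamp (2 - 2 * q.2) * q.1.2)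

lemma coneRetraction_fst (c : U × ℝ) (t : I) :
    (coneRetraction f L (c, t)).1 = f (c.1, unitClamp (2 * t) * unitClamp (c.2 - L + 2)) := rfl

lemma coneRetraction_snd (c : U × ℝ) (t : I) :
    (coneRetraction f L (c, t)).2 = unitClamp (2 - 2 * t) * c.2 := rfl

lemma coneRetraction_snd_mem {c : U × ℝ} (hc : c.2 ∈ Icc 0 L) (t : I) :
    (coneRetraction f L (c, t)).2 ∈ Icc 0 L := by
  set β := unitClamp (2 - 2 * t)
  exact ⟨mul_nonneg β.2.1 hc.1, (mul_le_of_le_one_left hc.1 β.2.2).trans hc.2⟩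

lemma coneRetraction_zero (hf₀ : ∀ x, f (x, 0) = x) (c : U × ℝ) :
    coneRetraction f L (c, 0) = c := by
  rw [coneRetraction, Icc.coe_zero, mul_zero, unitClamp_of_nonpos le_rfl, zero_mul, hf₀,
    sub_zero, unitClamp_of_one_le one_le_two, Icc.coe_one, one_mul]

lemma coneRetraction_one_snd (c : U × ℝ) : (coneRetraction f L (c, 1)).2 = 0 := by
  rw [coneRetraction_snd, Icc.coe_one, mul_one, sub_self, unitClamp_of_nonpos le_rfl, Icc.coe_zero,
    zero_mul]

lemma coneRetraction_of_snd_eq_zero (hf₀ : ∀ x, f (x, 0) = x) (hL : 2 ≤ L) {c : U × ℝ}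
    (hc : c.2 = 0) (t : I) : coneRetraction f L (c, t) = c := by
  rw [coneRetraction, unitClamp_of_nonpos (by linarith : c.2 - L + 2 ≤ 0), mul_zero, hf₀]
  exact Prod.ext rfl (by simp [hc])

variable [PseudoMetricSpace U] {K : NNReal}

lemma dist_coneRetraction_fst_le (hf : LipschitzWith K f) (c c' : U × ℝ) (t : I) :
    dist (coneRetraction f L (c, t)).1 (coneRetraction f L (c', t)).1 ≤
      K * max (dist c.1 c'.1) |c.2 - c'.2| := by
  refine (hf.dist_le_mul _ _).trans (mul_le_mul_of_nonneg_left ?_ K.2)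
  rw [Prod.dist_eq]
  refine max_le_max le_rfl ((unitInterval.dist_mul_left_le _ _ _).trans ?_)
  exact (dist_unitClamp_le _ _).trans_eq (by ring_nf)

lemma coneQuasiDist_coneRetraction_time_le (hf : LipschitzWith K f) {c : U × ℝ}
    (hc : c.2 ∈ Icc 0 L) (s t : I) :
    coneQuasiDist L (coneRetraction f L (c, s)) (coneRetraction f L (c, t)) ≤
      2 * L * (K + 1) * dist s t := by
  have hst : |2 * (s : ℝ) - 2 * t| = 2 * dist s t := by
    rw [← mul_sub, abs_mul, abs_two, Subtype.dist_eq, Real.dist_eq]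
  have hheight : |(coneRetraction f L (c, s)).2 - (coneRetraction f L (c, t)).2| ≤
      2 * dist s t * L := by
    have hβ := dist_unitClamp_le (2 - 2 * (s : ℝ)) (2 - 2 * t)
    rw [sub_sub_sub_cancel_left, abs_sub_comm, hst, Subtype.dist_eq, Real.dist_eq] at hβ
    rw [coneRetraction_snd, coneRetraction_snd, ← sub_mul, abs_mul, abs_of_nonneg hc.1]
    exact mul_le_mul hβ hc.2 hc.1 (by positivity)
  have hmin : min (L - (coneRetraction f L (c, s)).2) (L - (coneRetraction f L (c, t)).2) ≤ L :=
    (min_le_left _ _).trans (by linarith [(coneRetraction_snd_mem hc s (f := f)).1])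
  have hθ : min π (dist (coneRetraction f L (c, s)).1 (coneRetraction f L (c, t)).1) ≤
      K * (2 * dist s t) := by
    refine (min_le_right _ _).trans <| (hf.dist_le_mul _ _).trans <|
      mul_le_mul_of_nonneg_left ?_ K.2
    rw [Prod.dist_eq]
    dsimp only
    rw [dist_self, max_eq_right dist_nonneg]
    refine (unitInterval.dist_mul_right_le _ _ _).trans ?_
    simpa only [hst] using dist_unitClamp_le (2 * (s : ℝ)) (2 * t)
  unfold coneQuasiDist
  nlinarith [mul_le_mul hmin hθ (le_min pi_nonneg dist_nonneg) (by linarith [hc.1, hc.2])]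

lemma min_pi_dist_coneRetraction_fst_le (hf : LipschitzWith K f) (c c' : U × ℝ) (t : I) :
    min π (dist (coneRetraction f L (c, t)).1 (coneRetraction f L (c', t)).1) ≤
      (K + 1) * (min π (dist c.1 c'.1) + |c.2 - c'.2|) :=
  min_pi_le_of_le_mul_max K.2 dist_nonneg (abs_nonneg _) (dist_coneRetraction_fst_le hf c c' t)

lemma coneQuasiDist_coneRetraction_le_of_le_half (hf : LipschitzWith K f) {c c' : U × ℝ}
    (hc : c.2 ∈ Icc 0 L) (hc' : c'.2 ∈ Icc 0 L) {t : I} (ht : (t : ℝ) ≤ 1 / 2) :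
    coneQuasiDist L (coneRetraction f L (c, t)) (coneRetraction f L (c', t)) ≤
      (K + 1) * (1 + L) * coneQuasiDist L c c' := by
  have hsnd : ∀ c : U × ℝ, (coneRetraction f L (c, t)).2 = c.2 := fun c => by
    rw [coneRetraction_snd, unitClamp_of_one_le (by linarith), Icc.coe_one, one_mul]
  set m := min (L - c.2) (L - c'.2)
  set θ := min π (dist c.1 c'.1)
  set δ := |c.2 - c'.2|
  have hm₀ : 0 ≤ m := le_min (by linarith [hc.2]) (by linarith [hc'.2])
  have hmL : m ≤ L := (min_le_left _ _).trans (by linarith [hc.1])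
  have hθ := mul_le_mul_of_nonneg_left (min_pi_dist_coneRetraction_fst_le hf c c' t (L := L)) hm₀
  have hmδ : (K + 1) * (m * δ) ≤ (K + 1) * (L * δ) := by gcongr
  have hLmθ : 0 ≤ (K + 1) * L * (m * θ) := by
    have : 0 ≤ θ := le_min pi_nonneg dist_nonneg
    have : 0 ≤ L := hm₀.trans hmL
    positivity
  have hKδ : 0 ≤ K * δ := mul_nonneg K.2 (abs_nonneg _)
  unfold coneQuasiDist
  rw [hsnd c, hsnd c']
  linarith

lemma min_pi_dist_coneRetraction_fst_le_of_half_le {p : U} (hf : LipschitzWith K f)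
    (hf₁ : ∀ x, f (x, 1) = p) {c c' : U × ℝ} (hc : c.2 ∈ Icc 0 L) (hc' : c'.2 ∈ Icc 0 L)
    {t : I} (ht : 1 / 2 ≤ (t : ℝ)) :
    min π (dist (coneRetraction f L (c, t)).1 (coneRetraction f L (c', t)).1) ≤
      2 * (K + 1 + π) * coneQuasiDist L c c' := by
  set m := min (L - c.2) (L - c'.2)
  set θ := min π (dist c.1 c'.1)
  have hθ₀ : 0 ≤ θ := le_min pi_nonneg dist_nonneg
  rcases le_or_gt (1 / 2) m with hm | hm
  · have := min_pi_dist_coneRetraction_fst_le hf c c' t (L := L)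
    unfold coneQuasiDist
    nlinarith [mul_le_mul_of_nonneg_right hm hθ₀, abs_nonneg (c.2 - c'.2), K.2, pi_pos]
  by_cases hapex : L - 1 ≤ c.2 ∧ L - 1 ≤ c'.2
  · -- both points have been contracted all the way to `p`
    have hα : unitClamp (2 * t) = 1 := unitClamp_of_one_le (by linarith)
    rw [coneRetraction_fst, coneRetraction_fst, hα, one_mul, one_mul,
      unitClamp_of_one_le (by linarith [hapex.1]), unitClamp_of_one_le (by linarith [hapex.2]),
      hf₁, hf₁, dist_self, min_eq_right pi_nonneg]
    exact mul_nonneg (by positivity) ((abs_nonneg _).trans (abs_sub_le_coneQuasiDist hc.2 hc'.2))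
  · have hfar : 1 / 2 ≤ |c.2 - c'.2| := by
      rw [not_and_or, not_le, not_le] at hapex
      rcases min_lt_iff.mp hm with h | h <;> rcases hapex with h' | h' <;>
        linarith [le_abs_self (c.2 - c'.2), neg_abs_le (c.2 - c'.2)]
    calc min π _ ≤ π := min_le_left _ _
      _ ≤ 2 * (K + 1 + π) * |c.2 - c'.2| := by nlinarith [K.2, pi_pos]
      _ ≤ 2 * (K + 1 + π) * coneQuasiDist L c c' := by
        gcongr
        exact abs_sub_le_coneQuasiDist hc.2 hc'.2

lemma coneQuasiDist_coneRetraction_le {p : U} (hf : LipschitzWith K f) (hf₁ : ∀ x, f (x, 1) = p)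
    {c c' : U × ℝ} (hc : c.2 ∈ Icc 0 L) (hc' : c'.2 ∈ Icc 0 L) (t : I) :
    coneQuasiDist L (coneRetraction f L (c, t)) (coneRetraction f L (c', t)) ≤
      (K + 1 + π) * (1 + 2 * L) * coneQuasiDist L c c' := by
  have hL : 0 ≤ L := hc.1.trans hc.2
  have hD := abs_sub_le_coneQuasiDist hc.2 hc'.2
  have hD₀ : 0 ≤ coneQuasiDist L c c' := (abs_nonneg _).trans hD
  rcases le_total (t : ℝ) (1 / 2) with ht | ht
  · refine (coneQuasiDist_coneRetraction_le_of_le_half hf hc hc' ht).trans ?_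
    gcongr <;> linarith [pi_gt_three]
  rw [coneQuasiDist, coneRetraction_snd, coneRetraction_snd]
  set β := unitClamp (2 - 2 * t)
  have hheight : |(β : ℝ) * c.2 - β * c'.2| ≤ |c.2 - c'.2| := by
    rw [← mul_sub, abs_mul, abs_of_nonneg β.2.1]
    exact mul_le_of_le_one_left (abs_nonneg _) β.2.2
  have hmin : min (L - β * c.2) (L - β * c'.2) ≤ L :=
    (min_le_left _ _).trans (by linarith [mul_nonneg β.2.1 hc.1])
  have hθ := mul_le_mul hmin (min_pi_dist_coneRetraction_fst_le_of_half_le hf hf₁ hc hc' ht)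
    (le_min pi_nonneg dist_nonneg) hL
  have : 0 ≤ (K + π) * coneQuasiDist L c c' := mul_nonneg (by positivity) hD₀
  linarith

lemma coneDist_coneRetraction_le {p : U} (hf : LipschitzWith K f) (hf₁ : ∀ x, f (x, 1) = p)
    {c c' : U × ℝ} (hc : c.2 ∈ Icc 0 L) (hc' : c'.2 ∈ Icc 0 L) (s t : I) :
    coneDist L (coneRetraction f L (c, s)) (coneRetraction f L (c', t)) ≤
      5 * (1 + π) * (2 * L * (K + 1) + π * ((K + 1 + π) * (1 + 2 * L))) *
        max (coneDist L c c') (dist s t) := by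
  have hL : 0 ≤ L := hc.1.trans hc.2
  have hmem := fun (c : U × ℝ) (hc : c.2 ∈ Icc 0 L) (t : I) =>
    (coneRetraction_snd_mem hc t (f := f)).2
  calc coneDist L (coneRetraction f L (c, s)) (coneRetraction f L (c', t))
      ≤ 5 * coneQuasiDist L (coneRetraction f L (c, s)) (coneRetraction f L (c', t)) :=
        coneDist_le_five_mul_coneQuasiDist (hmem c hc s) (hmem c' hc' t)
    _ ≤ 5 * ((1 + π) * (coneQuasiDist L (coneRetraction f L (c, s)) (coneRetraction f L (c, t)) +
          coneQuasiDist L (coneRetraction f L (c, t)) (coneRetraction f L (c', t)))) := by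
        gcongr
        exact coneQuasiDist_triangle (hmem c hc s) (hmem c hc t) (hmem c' hc' t)
    _ ≤ 5 * ((1 + π) * (2 * L * (K + 1) * dist s t +
          (K + 1 + π) * (1 + 2 * L) * (π * coneDist L c c'))) := by
        gcongr
        · exact coneQuasiDist_coneRetraction_time_le hf hc s t
        · exact (coneQuasiDist_coneRetraction_le hf hf₁ hc hc' t).trans
            (by gcongr; exact coneQuasiDist_le_pi_mul_coneDist hc.2 hc'.2)
    _ ≤ 5 * ((1 + π) * (2 * L * (K + 1) * max (coneDist L c c') (dist s t) +
          (K + 1 + π) * (1 + 2 * L) * (π * max (coneDist L c c') (dist s t)))) := by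
        gcongr
        exacts [le_max_right _ _, le_max_left _ _]
    _ = _ := by ring

end Retraction

/-- If a metric space `U` admits a Lipschitz strong deformation
retraction to a point `p ∈ U`, and `L > 6`, then the cone `K(U)` admits a Lipschitz strong
deformation retraction onto its base `U × {0}`.  This is expressed on representatives in
`U × [0,L]`, with Lipschitz continuity measured by the cone distance (and the sup product
with `[0,1]`), and with equalities in the cone expressed as vanishing of the cone
distance. -/
theorem cone_lipSDR_onto_base {U : Type*} [MetricSpace U] (p : U)
    (h : SpaceLipSDRToPoint U p) (L : ℝ) (hL : 6 < L) :
    ∃ (F : (U × ℝ) × unitInterval → U × ℝ) (K : NNReal),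
      (∀ c : U × ℝ, c.2 ∈ Icc 0 L → ∀ t : unitInterval, (F (c, t)).2 ∈ Icc 0 L) ∧
      (∀ c c' : U × ℝ, c.2 ∈ Icc 0 L → c'.2 ∈ Icc 0 L → ∀ s t : unitInterval,
        coneDist L (F (c, s)) (F (c', t)) ≤ K * max (coneDist L c c') (dist s t)) ∧
      (∀ c : U × ℝ, c.2 ∈ Icc 0 L → coneDist L (F (c, 0)) c = 0) ∧
      (∀ c : U × ℝ, c.2 ∈ Icc 0 L → (F (c, 1)).2 = 0) ∧
      (∀ c : U × ℝ, c.2 = 0 → ∀ t : unitInterval, F (c, t) = c) := by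
  obtain ⟨f, K, hf, hf₀, hf₁, -⟩ := h
  refine ⟨coneRetraction f L,
    (5 * (1 + π) * (2 * L * (K + 1) + π * ((K + 1 + π) * (1 + 2 * L)))).toNNReal,
    fun c hc t => coneRetraction_snd_mem hc t, fun c c' hc hc' s t => ?_,
    fun c _ => by rw [coneRetraction_zero hf₀, coneDist_self],
    fun c _ => coneRetraction_one_snd c,
    fun c hc t => coneRetraction_of_snd_eq_zero hf₀ (by linarith) hc t⟩
  exact (coneDist_coneRetraction_le hf hf₁ hc hc' s t).trans <|
    mul_le_mul_of_nonneg_right (Real.le_coe_toNNReal _) (le_max_of_le_right dist_nonneg)
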